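/- arXiv:2011.08159 — 5 statements merged into one kernel-verified Lean document; each statement's English description precedes it below -/
import Mathlib

section
/- Let $g_n, g_f, g_p$ be independent, with $g_u$ ($u \in \{n,f\}$) Gamma distributed with integer shape $N_u \geq 1$ and scale $\Omega_u > 0$, and $g_p$ exponential with mean $\Omega_p > 0$. Let $I > 0$, $\theta > 0$, and $a_n \in (0, 1/(1+\theta))$, $a_f = 1 - a_n$. Define $\xi_n = \theta \max\{1/(a_f - a_n\theta), 1/a_n\}$ and $\xi_f = \theta/(a_f - a_n\theta)$. Then $1 - \Pr(g_n/g_p \geq \xi_n/I)\Pr(g_f/g_p \geq \xi_f/I) = 1 - \prod_{u\in\{n,f\}}\left[1 - \left(\frac{\Omega_p \xi_u}{\Omega_u I + \Omega_p \xi_u}\right)^{N_u}\right]$. -/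
/-
Almost surely `g_p > 0`, so `{g_u / g_p < c} = {g_u / c < g_p}`. Conditioning on `g_u = x`,
the exponential tail gives `Pr(g_p > x / c) = exp (-(q / c) x)`, hence `Pr(g_u / g_p < c)` is
the Laplace transform of the Gamma law at `q / c`. Exponential tilting `r ↦ r + s` turns the
Gamma density times `exp (-s x)` into `(r / (r + s)) ^ a` times another Gamma density, so that
transform is `(r / (r + q / c)) ^ a`; with `r = Ω_u⁻¹`, `q = Ω_p⁻¹`, `c = ξ_u / I` this is the
stated factor.
-/

open MeasureTheory ProbabilityTheory Real Set

section GammaLaplace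

variable {a r s : ℝ}

lemma measurable_gammaPDF (a r : ℝ) : Measurable (gammaPDF a r) :=
  (measurable_gammaPDFReal a r).ennreal_ofReal

lemma ae_pos_gammaMeasure : ∀ᵐ x ∂gammaMeasure a r, 0 < x := by
  rw [gammaMeasure, ae_withDensity_iff (measurable_gammaPDF a r)]
  filter_upwards [Measure.ae_ne volume 0] with x hx0 hpdf
  exact lt_of_le_of_ne (not_lt.mp fun hx => hpdf (gammaPDF_of_neg hx)) hx0.symm

lemma gammaPDF_mul_exp_neg (hr : 0 ≤ r) (hrs : 0 < r + s) (x : ℝ) :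
    gammaPDF a r x * ENNReal.ofReal (exp (-(s * x)))
      = ENNReal.ofReal ((r / (r + s)) ^ a) * gammaPDF a (r + s) x := by
  rcases lt_or_ge x 0 with hx | hx
  · simp [gammaPDF_of_neg hx]
  have hexp : exp (-((r + s) * x)) = exp (-(r * x)) * exp (-(s * x)) := by
    rw [← exp_add]; ring_nf
  rw [gammaPDF_of_nonneg hx, gammaPDF_of_nonneg hx, ← ENNReal.ofReal_mul' (exp_pos _).le,
    ← ENNReal.ofReal_mul (by positivity), div_rpow hr hrs.le, hexp]
  congr 1
  field_simp [(rpow_pos_of_pos hrs a).ne']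

lemma lintegral_exp_neg_mul_gammaMeasure (ha : 0 < a) (hr : 0 ≤ r) (hrs : 0 < r + s) :
    ∫⁻ x, ENNReal.ofReal (exp (-(s * x))) ∂gammaMeasure a r
      = ENNReal.ofReal ((r / (r + s)) ^ a) := by
  rw [gammaMeasure, lintegral_withDensity_eq_lintegral_mul _
      (measurable_gammaPDF a r) (by fun_prop)]
  simp only [Pi.mul_apply, gammaPDF_mul_exp_neg hr hrs]
  rw [lintegral_const_mul _ (measurable_gammaPDF a (r + s)),
    lintegral_gammaPDF_eq_one ha hrs, mul_one]

end GammaLaplace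

lemma expMeasure_Ioi {r t : ℝ} (hr : 0 < r) (ht : 0 ≤ t) :
    expMeasure r (Ioi t) = ENNReal.ofReal (exp (-(r * t))) := by
  have := isProbabilityMeasure_expMeasure hr
  rw [← compl_Iic, prob_compl_eq_one_sub measurableSet_Iic, ← ofReal_cdf, cdf_expMeasure_eq hr,
    if_pos ht, ← ENNReal.ofReal_one, ← ENNReal.ofReal_sub _ (by simp [mul_nonneg hr.le ht]),
    sub_sub_cancel]

section GammaOverExponential

variable {Ω : Type*} [MeasurableSpace Ω] {P : Measure Ω} {X Y : Ω → ℝ} {a r q c : ℝ}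

lemma measure_div_lt_of_indepFun_gamma_exp [IsFiniteMeasure P] (hX : Measurable X)
    (hY : Measurable Y) (hind : IndepFun X Y P) (ha : 0 < a) (hr : 0 ≤ r)
    (hXlaw : P.map X = gammaMeasure a r) (hq : 0 < q) (hYlaw : P.map Y = expMeasure q)
    (hc : 0 < c) :
    P {ω | X ω / Y ω < c} = ENNReal.ofReal ((r / (r + q / c)) ^ a) := by
  have hYpos : ∀ᵐ ω ∂P, 0 < Y ω :=
    ae_of_ae_map hY.aemeasurable (by rw [hYlaw]; exact ae_pos_gammaMeasure)
  set S : Set (ℝ × ℝ) := {p | p.1 / c < p.2}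
  have hS : MeasurableSet S := measurableSet_lt (by fun_prop) (by fun_prop)
  have hevent : {ω | X ω / Y ω < c} =ᵐ[P] (fun ω => (X ω, Y ω)) ⁻¹' S := by
    rw [Filter.eventuallyEq_set]
    filter_upwards [hYpos] with ω hω
    simp only [S, mem_ofPred_eq, mem_preimage, div_lt_iff₀ hω, div_lt_iff₀ hc, mul_comm]
  calc P {ω | X ω / Y ω < c} = P ((fun ω => (X ω, Y ω)) ⁻¹' S) := measure_congr hevent
    _ = ((P.map X).prod (P.map Y)) S := by
      rw [← (indepFun_iff_map_prod_eq_prod_map_map hX.aemeasurable hY.aemeasurable).mp hind,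
        Measure.map_apply (hX.prodMk hY) hS]
    _ = ∫⁻ x, expMeasure q (Ioi (x / c)) ∂gammaMeasure a r := by
      rw [Measure.prod_apply hS, hXlaw, hYlaw]
      rfl
    _ = ∫⁻ x, ENNReal.ofReal (exp (-(q / c * x))) ∂gammaMeasure a r := by
      refine lintegral_congr_ae ?_
      filter_upwards [ae_pos_gammaMeasure] with x hx
      rw [expMeasure_Ioi hq (div_nonneg hx.le hc.le), mul_div_assoc', div_mul_eq_mul_div]
    _ = ENNReal.ofReal ((r / (r + q / c)) ^ a) :=
      lintegral_exp_neg_mul_gammaMeasure ha hr (by positivity)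

lemma measureReal_le_div_of_indepFun_gamma_exp [IsProbabilityMeasure P] (hX : Measurable X)
    (hY : Measurable Y) (hind : IndepFun X Y P) (ha : 0 < a) (hr : 0 ≤ r)
    (hXlaw : P.map X = gammaMeasure a r) (hq : 0 < q) (hYlaw : P.map Y = expMeasure q)
    (hc : 0 < c) :
    P.real {ω | c ≤ X ω / Y ω} = 1 - (r / (r + q / c)) ^ a := by
  have hcompl : {ω | c ≤ X ω / Y ω} = {ω | X ω / Y ω < c}ᶜ := by
    ext ω
    simp
  have hmeas : MeasurableSet {ω | X ω / Y ω < c} :=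
    measurableSet_lt (by fun_prop) measurable_const
  rw [hcompl, probReal_compl_eq_one_sub hmeas,
    measureReal_def, measure_div_lt_of_indepFun_gamma_exp hX hY hind ha hr hXlaw hq hYlaw hc,
    ENNReal.toReal_ofReal (by positivity)]

end GammaOverExponential

/-- Outage probability of the IntICSI NOMA underlay system: with independent
`g_n ~ Gamma(Nn, Ωn)`, `g_f ~ Gamma(Nf, Ωf)`, `g_p ~ Exp(mean Ωp)`, thresholds
`ξn = θ max{1/(a_f - a_n θ), 1/a_n}`, `ξf = θ/(a_f - a_n θ)`, one has
`1 - Pr(g_n/g_p ≥ ξn/I) Pr(g_f/g_p ≥ ξf/I)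
  = 1 - ∏_u [1 - (Ωp ξu / (Ωu I + Ωp ξu))^{Nu}]`. -/
theorem outage_IntICSI {Ωs : Type*} [MeasureSpace Ωs]
    [IsProbabilityMeasure (ℙ : Measure Ωs)]
    (gn gf gp : Ωs → ℝ) (hmn : Measurable gn) (hmf : Measurable gf) (hmp : Measurable gp)
    (Nn Nf : ℕ) (hNn : 1 ≤ Nn) (hNf : 1 ≤ Nf)
    (Ωn Ωf Ωp : ℝ) (hΩn : 0 < Ωn) (hΩf : 0 < Ωf) (hΩp : 0 < Ωp)
    (hgn : Measure.map gn ℙ = gammaMeasure Nn Ωn⁻¹)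
    (hgf : Measure.map gf ℙ = gammaMeasure Nf Ωf⁻¹)
    (hgp : Measure.map gp ℙ = expMeasure Ωp⁻¹)
    (hind : iIndepFun ![gn, gf, gp] ℙ)
    (I θ an : ℝ) (hI : 0 < I) (hθ : 0 < θ) (han : an ∈ Set.Ioo (0 : ℝ) (1 / (1 + θ)))
    (af ξn ξf : ℝ) (haf : af = 1 - an)
    (hξn : ξn = θ * max (1 / (af - an * θ)) (1 / an))
    (hξf : ξf = θ / (af - an * θ)) :
    1 - (ℙ {ω | ξn / I ≤ gn ω / gp ω}).toReal * (ℙ {ω | ξf / I ≤ gf ω / gp ω}).toReal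
      = 1 - (1 - (Ωp * ξn / (Ωn * I + Ωp * ξn)) ^ Nn)
          * (1 - (Ωp * ξf / (Ωf * I + Ωp * ξf)) ^ Nf) := by
  obtain ⟨han_pos, han_lt⟩ := han
  have hgap : 0 < af - an * θ := by
    rw [lt_div_iff₀ (by positivity)] at han_lt
    linarith [haf]
  have hξn_pos : 0 < ξn := hξn ▸ mul_pos hθ (lt_max_of_lt_right (by positivity))
  have hξf_pos : 0 < ξf := hξf ▸ div_pos hθ hgap
  have hrate : ∀ Ω ξ : ℝ, 0 < Ω → 0 < ξ →
      Ω⁻¹ / (Ω⁻¹ + Ωp⁻¹ / (ξ / I)) = Ωp * ξ / (Ω * I + Ωp * ξ) := by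
    intro Ω ξ hΩ hξ
    field_simp
    ring
  have hn := measureReal_le_div_of_indepFun_gamma_exp hmn hmp (hind.indepFun (i := 0) (j := 2)
    (by decide)) (Nat.cast_pos.mpr hNn) (inv_nonneg.mpr hΩn.le) hgn (inv_pos.mpr hΩp) hgp
    (div_pos hξn_pos hI)
  have hf := measureReal_le_div_of_indepFun_gamma_exp hmf hmp (hind.indepFun (i := 1) (j := 2)
    (by decide)) (Nat.cast_pos.mpr hNf) (inv_nonneg.mpr hΩf.le) hgf (inv_pos.mpr hΩp) hgp
    (div_pos hξf_pos hI)
  rw [← measureReal_def, ← measureReal_def, hn, hf, hrate Ωn ξn hΩn hξn_pos,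
    hrate Ωf ξf hΩf hξf_pos, rpow_natCast, rpow_natCast]
end

section
/- Fix $\theta > 0$ and $\Omega_n, \Omega_f > 0$. The quadratic equation $a_n^2(1+\theta)\{(1+\theta)\Omega_f - \Omega_n\} - 2a_n\Omega_f(1+\theta) + \Omega_f = 0$ has exactly one root in the interval $(0, 1/(1+\theta))$ when $(1+\theta)\Omega_f \neq \Omega_n$, given by $a_n^* = \frac{\Omega_f}{(1+\theta)\Omega_f - \Omega_n} - \frac{\sqrt{\Omega_n\Omega_f(1+\theta)}}{(1+\theta)\{(1+\theta)\Omega_f - \Omega_n\}}$. -/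
/-!
Put `c = 1 + θ`, `p = √(c Ωf)`, `q = √Ωn` and `y = c a`. Multiplied by `c`, the quadratic becomes
`(p² - q²) y² - 2 p² y + p²`, which factors as `((p + q) y - p) ((p - q) y - p)`.
On `0 ≤ y < 1` the second factor is negative, so the only root there is `y = p / (p + q)`,
which lies in `(0, 1)`; and `a*` is exactly `p / (p + q) / c`.
-/

open Real Set

theorem div_add_mem_Ioo_zero_one {p q : ℝ} (hp : 0 < p) (hq : 0 < q) :
    p / (p + q) ∈ Ioo 0 1 :=
  ⟨by positivity, (div_lt_one (by positivity)).2 (by linarith)⟩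

theorem factored_quadratic_eq_zero_iff {p q y : ℝ} (hp : 0 < p) (hq : 0 ≤ q)
    (hy₀ : 0 ≤ y) (hy₁ : y < 1) :
    ((p + q) * y - p) * ((p - q) * y - p) = 0 ↔ y = p / (p + q) := by
  have hneg : (p - q) * y - p < 0 := by nlinarith
  rw [mul_eq_zero, or_iff_left hneg.ne, eq_div_iff (by positivity), sub_eq_zero, mul_comm]

theorem mem_Ioo_zero_one_div_iff {c a : ℝ} (hc : 0 < c) :
    a ∈ Ioo 0 (1 / c) ↔ c * a ∈ Ioo 0 1 := by
  simp only [mem_Ioo, lt_div_iff₀ hc, mul_pos_iff_of_pos_left hc, mul_comm a]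

section

variable {c Ωn Ωf : ℝ}

theorem mul_quadratic_eq_factored (hc : 0 < c) (hΩn : 0 ≤ Ωn) (hΩf : 0 ≤ Ωf) (a : ℝ) :
    c * (a ^ 2 * c * (c * Ωf - Ωn) - 2 * a * Ωf * c + Ωf)
      = ((√(c * Ωf) + √Ωn) * (c * a) - √(c * Ωf)) * ((√(c * Ωf) - √Ωn) * (c * a) - √(c * Ωf)) := by
  have hp := sq_sqrt (mul_nonneg hc.le hΩf)
  have hq := sq_sqrt hΩn
  linear_combination (-(c * a) ^ 2 + 2 * (c * a) - 1) * hp + (c * a) ^ 2 * hq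

theorem root_formula_eq_sqrt_div (hc : 0 < c) (hΩn : 0 < Ωn) (hΩf : 0 < Ωf) (hne : c * Ωf ≠ Ωn) :
    Ωf / (c * Ωf - Ωn) - √(Ωn * Ωf * c) / (c * (c * Ωf - Ωn))
      = √(c * Ωf) / (√(c * Ωf) + √Ωn) / c := by
  have hs : √(Ωn * Ωf * c) = √(c * Ωf) * √Ωn := by
    rw [← sqrt_mul (mul_pos hc hΩf).le]; ring_nf
  have hp2 := sq_sqrt (mul_pos hc hΩf).le
  have hq2 := sq_sqrt hΩn.le
  set p := √(c * Ωf)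
  have hD : c * Ωf - Ωn = (p - √Ωn) * (p + √Ωn) := by linear_combination -hp2 + hq2
  have hpq : p - √Ωn ≠ 0 := by
    intro h; exact hne (sub_eq_zero.1 (by rw [hD, h, zero_mul]))
  rw [← mul_div_mul_left Ωf _ hc.ne', div_sub_div_same, hs, hD, ← hp2]
  field_simp

end

/-- The quadratic `a²(1+θ)((1+θ)Ωf - Ωn) - 2aΩf(1+θ) + Ωf = 0` has exactly one root in
`(0, 1/(1+θ))` when `(1+θ)Ωf ≠ Ωn`, namely
`a* = Ωf/((1+θ)Ωf - Ωn) - √(ΩnΩf(1+θ))/((1+θ)((1+θ)Ωf - Ωn))`. -/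
theorem quadratic_root_IntSCSI (θ Ωn Ωf : ℝ) (hθ : 0 < θ) (hΩn : 0 < Ωn) (hΩf : 0 < Ωf)
    (hne : (1 + θ) * Ωf ≠ Ωn) :
    let astar : ℝ := Ωf / ((1 + θ) * Ωf - Ωn)
      - Real.sqrt (Ωn * Ωf * (1 + θ)) / ((1 + θ) * ((1 + θ) * Ωf - Ωn));
    astar ∈ Set.Ioo (0 : ℝ) (1 / (1 + θ)) ∧
      ∀ a ∈ Set.Ioo (0 : ℝ) (1 / (1 + θ)),
        (a ^ 2 * (1 + θ) * ((1 + θ) * Ωf - Ωn) - 2 * a * Ωf * (1 + θ) + Ωf = 0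
          ↔ a = astar) := by
  intro astar
  have hc : 0 < 1 + θ := by linarith
  have hp : 0 < √((1 + θ) * Ωf) := sqrt_pos.2 (mul_pos hc hΩf)
  have hq : 0 < √Ωn := sqrt_pos.2 hΩn
  have hastar : (1 + θ) * astar = √((1 + θ) * Ωf) / (√((1 + θ) * Ωf) + √Ωn) := by
    rw [show astar = _ from root_formula_eq_sqrt_div hc hΩn hΩf hne, mul_div_cancel₀ _ hc.ne']
  refine ⟨(mem_Ioo_zero_one_div_iff hc).2 (hastar ▸ div_add_mem_Ioo_zero_one hp hq), ?_⟩
  intro a ha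
  obtain ⟨hy₀, hy₁⟩ := (mem_Ioo_zero_one_div_iff hc).1 ha
  rw [← mul_eq_zero_iff_left hc.ne', mul_quadratic_eq_factored hc hΩn.le hΩf.le,
    factored_quadratic_eq_zero_iff hp hq.le hy₀.le hy₁, ← hastar, mul_right_inj' hc.ne']
end

section
/- Let $g_n, g_f, g_p$ be independent: $g_u$ Gamma with integer shape $N_u \geq 1$ and scale $\Omega_u > 0$ ($u \in \{n,f\}$), $g_p$ exponential with mean $\Omega_p > 0$. Let $I, P_{\mathrm{peak}}, \xi_n, \xi_f > 0$. Then $\Pr\left(\frac{g_n}{g_p} \geq \frac{\xi_n}{I},\ \frac{g_f}{g_p} \geq \frac{\xi_f}{I},\ g_p > \frac{I}{P_{\mathrm{peak}}}\right) = \frac{1}{\Omega_p}\sum_{k=0}^{N_f-1}\sum_{l=0}^{N_n-1}\frac{\xi_n^l \xi_f^k}{k!\,l!\,\Omega_n^l\,\Omega_f^k\,I^{k+l}}\,\Gamma\left[k+l+1,\left(\frac{1}{\Omega_p}+\frac{\xi_n}{\Omega_n I}+\frac{\xi_f}{\Omega_f I}\right)\frac{I}{P_{\mathrm{peak}}}\right]\left(\frac{1}{\Omega_p}+\frac{\xi_n}{\Omega_n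 I}+\frac{\xi_f}{\Omega_f I}\right)^{-(k+l+1)}$. -/
/-!
Conditioning on `g_p = z`, the event reads `z > I/P_peak`, `g_n ≥ (ξ_n/I) z`, `g_f ≥ (ξ_f/I) z`;
by independence its probability is `∫_{z > I/P_peak} f_p(z) Pr(g_n ≥ a z) Pr(g_f ≥ b z) dz`.
For integer shape `N` the Gamma tail is `e^{-rx} ∑_{j<N} (rx)^j/j!` (its derivative telescopes
to minus the density), so the integrand is a finite double sum of terms `z^{k+l} e^{-βz}`, and
the substitution `t = βz` turns each of them into an upper incomplete Gamma function.
-/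

open MeasureTheory ProbabilityTheory Real
open Set Filter Topology Finset
open scoped Nat ENNReal

lemma integrableOn_Ioi_pow_mul_exp_neg_mul {β : ℝ} (hβ : 0 < β) (n : ℕ) {c : ℝ} (hc : 0 ≤ c) :
    IntegrableOn (fun z => z ^ n * exp (-(β * z))) (Ioi c) := by
  refine ((integrableOn_rpow_mul_exp_neg_mul_rpow (s := n)
    (neg_one_lt_zero.trans_le n.cast_nonneg) one_pos hβ).mono_set
    (Ioi_subset_Ioi hc)).congr_fun (fun z _ => ?_) measurableSet_Ioi
  simp only [rpow_natCast, rpow_one, neg_mul]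

lemma integral_Ioi_pow_mul_exp_neg_mul {β : ℝ} (hβ : 0 < β) (n : ℕ) (c : ℝ) :
    ∫ z in Ioi c, z ^ n * exp (-(β * z))
      = (∫ t in Ioi (β * c), t ^ n * exp (-t)) / β ^ (n + 1) := by
  have h := integral_comp_mul_left_Ioi (fun t => t ^ n * exp (-t)) c hβ
  simp only [mul_pow, mul_assoc, integral_const_mul, smul_eq_mul] at h
  rw [eq_div_iff (by positivity), pow_succ, ← mul_assoc, mul_comm _ (β ^ n), h]
  field_simp

namespace ProbabilityTheory

noncomputable def erlangTail (N : ℕ) (r x : ℝ) : ℝ :=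
  exp (-(r * x)) * ∑ j ∈ range N, (r * x) ^ j / j !

lemma erlangTail_succ (N : ℕ) (r x : ℝ) :
    erlangTail (N + 1) r x = erlangTail N r x + (r * x) ^ N / N ! * exp (-(r * x)) := by
  simp only [erlangTail, sum_range_succ]
  ring

lemma erlangTail_nonneg (N : ℕ) {r x : ℝ} (hr : 0 ≤ r) (hx : 0 ≤ x) : 0 ≤ erlangTail N r x := by
  unfold erlangTail
  have := mul_nonneg hr hx
  positivity

lemma continuous_erlangTail (N : ℕ) (r : ℝ) : Continuous (erlangTail N r) := by
  unfold erlangTail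
  fun_prop

lemma erlangTail_mul_right (N : ℕ) (r a x : ℝ) :
    erlangTail N r (a * x) = erlangTail N (r * a) x := by
  simp only [erlangTail, mul_assoc]

lemma hasDerivAt_erlangTail (N : ℕ) (r x : ℝ) :
    HasDerivAt (erlangTail (N + 1) r) (-(r * ((r * x) ^ N / N ! * exp (-(r * x))))) x := by
  have hexp : HasDerivAt (fun y => exp (-(r * y))) (exp (-(r * x)) * -r) x := by
    simpa using ((hasDerivAt_id x).const_mul r).neg.exp
  induction N with
  | zero =>
    have h : erlangTail 1 r = fun y => exp (-(r * y)) := by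
      funext y; simp [erlangTail]
    rw [h]
    refine hexp.congr_deriv ?_
    simp only [pow_zero, Nat.factorial_zero, Nat.cast_one, div_one, one_mul]
    ring
  | succ N ih =>
    have hterm : HasDerivAt (fun y => (r * y) ^ (N + 1) / (N + 1)! * exp (-(r * y)))
        (r * ((r * x) ^ N / N ! * exp (-(r * x)))
          - r * ((r * x) ^ (N + 1) / (N + 1)! * exp (-(r * x)))) x := by
      have hpow := (((hasDerivAt_id x).const_mul r).pow (N + 1)).div_const ((N + 1)! : ℝ)
      refine (hpow.mul hexp).congr_deriv ?_
      simp only [id, Pi.pow_apply, Nat.add_sub_cancel, Nat.factorial_succ, Nat.cast_mul]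
      field_simp
      ring
    have hsplit : erlangTail (N + 2) r
        = fun y => erlangTail (N + 1) r y + (r * y) ^ (N + 1) / (N + 1)! * exp (-(r * y)) :=
      funext fun y => erlangTail_succ (N + 1) r y
    rw [hsplit]
    exact (ih.add hterm).congr_deriv (by ring)

lemma tendsto_erlangTail_atTop (N : ℕ) {r : ℝ} (hr : 0 < r) :
    Tendsto (erlangTail N r) atTop (𝓝 0) := by
  have hlin : Tendsto (fun x : ℝ => r * x) atTop atTop := tendsto_id.const_mul_atTop hr
  have hterm (j : ℕ) : Tendsto (fun x : ℝ => (r * x) ^ j * exp (-(r * x)) / j !) atTop (𝓝 0) := by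
    simpa using ((tendsto_pow_mul_exp_neg_atTop_nhds_zero j).comp hlin).div_const (j ! : ℝ)
  have hsum := tendsto_finsetSum (range N) fun j _ => hterm j
  rw [sum_const_zero] at hsum
  refine hsum.congr fun x => ?_
  simp only [erlangTail, mul_sum]
  exact sum_congr rfl fun j _ => by ring

lemma gammaPDF_natCast_succ (N : ℕ) (r : ℝ) {x : ℝ} (hx : 0 ≤ x) :
    gammaPDF ((N + 1 : ℕ) : ℝ) r x = ENNReal.ofReal (r * ((r * x) ^ N / N ! * exp (-(r * x)))) := by
  rw [gammaPDF_of_nonneg hx, rpow_natCast, Nat.cast_add_one, add_sub_cancel_right, rpow_natCast,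
    Gamma_nat_eq_factorial, pow_succ, mul_pow]
  congr 1
  ring

lemma gammaMeasure_Ici_natCast {N : ℕ} (hN : 0 < N) {r : ℝ} (hr : 0 < r) {s : ℝ} (hs : 0 ≤ s) :
    gammaMeasure N r (Ici s) = ENNReal.ofReal (erlangTail N r s) := by
  obtain ⟨N, rfl⟩ := Nat.exists_eq_add_one_of_ne_zero hN.ne'
  set density : ℝ → ℝ := fun x => r * ((r * x) ^ N / N ! * exp (-(r * x)))
  have hderiv : ∀ x ∈ Ici s, HasDerivAt (fun y => -erlangTail (N + 1) r y) (density x) x :=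
    fun x _ => (hasDerivAt_erlangTail N r x).neg.congr_deriv (neg_neg _)
  have hnonneg : ∀ x ∈ Ioi s, 0 ≤ density x := fun x hx => by
    have : 0 ≤ x := hs.trans hx.le
    positivity
  have hlim : Tendsto (fun y => -erlangTail (N + 1) r y) atTop (𝓝 0) := by
    simpa using (tendsto_erlangTail_atTop (N + 1) hr).neg
  rw [gammaMeasure, withDensity_apply _ measurableSet_Ici, ← setLIntegral_congr Ioi_ae_eq_Ici]
  calc ∫⁻ x in Ioi s, gammaPDF ((N + 1 : ℕ) : ℝ) r x
      = ∫⁻ x in Ioi s, ENNReal.ofReal (density x) :=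
        setLIntegral_congr_fun measurableSet_Ioi fun x hx =>
          gammaPDF_natCast_succ N r (hs.trans hx.le)
    _ = ENNReal.ofReal (∫ x in Ioi s, density x) :=
        (ofReal_integral_eq_lintegral_ofReal (integrableOn_Ioi_deriv_of_nonneg' hderiv hnonneg hlim)
          (ae_restrict_of_forall_mem measurableSet_Ioi hnonneg)).symm
    _ = ENNReal.ofReal (erlangTail (N + 1) r s) := by
        rw [integral_Ioi_of_hasDerivAt_of_nonneg' hderiv hnonneg hlim, zero_sub, neg_neg]

lemma setLIntegral_Ioi_expMeasure {r c : ℝ} (hc : 0 ≤ c) {f : ℝ → ℝ≥0∞} (hf : Measurable f) :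
    ∫⁻ z in Ioi c, f z ∂expMeasure r
      = ∫⁻ z in Ioi c, ENNReal.ofReal (r * exp (-(r * z))) * f z := by
  have hpdf : Measurable (exponentialPDF r) := (measurable_exponentialPDFReal r).ennreal_ofReal
  rw [show expMeasure r = volume.withDensity (exponentialPDF r) from rfl,
    setLIntegral_withDensity_eq_setLIntegral_mul _ hpdf hf measurableSet_Ioi]
  exact setLIntegral_congr_fun measurableSet_Ioi fun z hz => by
    rw [Pi.mul_apply, exponentialPDF_of_nonneg (hc.trans hz.le)]

lemma measure_lt_and_mul_le_and_mul_le {Ω : Type*} [MeasurableSpace Ω] {μ : Measure Ω}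
    [IsProbabilityMeasure μ] {X Y Z : Ω → ℝ} (hX : Measurable X) (hY : Measurable Y)
    (hZ : Measurable Z) (hind : iIndepFun ![X, Y, Z] μ) (a b c : ℝ) :
    μ {ω | c < Z ω ∧ a * Z ω ≤ X ω ∧ b * Z ω ≤ Y ω}
      = ∫⁻ z in Ioi c, μ.map X (Ici (a * z)) * μ.map Y (Ici (b * z)) ∂μ.map Z := by
  have hmeas : ∀ i, Measurable (![X, Y, Z] i) := fun i => by fin_cases i <;> assumption
  have hXY : IndepFun X Y μ := by simpa using hind.indepFun (show (0 : Fin 3) ≠ 1 by decide)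
  have hXYZ : IndepFun (fun ω => (X ω, Y ω)) Z μ := by
    simpa using hind.indepFun_prodMk hmeas 0 1 2 (by decide) (by decide)
  have hlaw : μ.map (fun ω => ((X ω, Y ω), Z ω)) = ((μ.map X).prod (μ.map Y)).prod (μ.map Z) := by
    rw [(indepFun_iff_map_prod_eq_prod_map_map (hX.prodMk hY).aemeasurable hZ.aemeasurable).mp hXYZ,
      (indepFun_iff_map_prod_eq_prod_map_map hX.aemeasurable hY.aemeasurable).mp hXY]
  set S : Set ((ℝ × ℝ) × ℝ) := {p | c < p.2 ∧ a * p.2 ≤ p.1.1 ∧ b * p.2 ≤ p.1.2}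
  have hS : MeasurableSet S := by measurability
  have hslice (z : ℝ) : (μ.map X).prod (μ.map Y) ((fun q => (q, z)) ⁻¹' S)
      = (Ioi c).indicator (fun z => μ.map X (Ici (a * z)) * μ.map Y (Ici (b * z))) z := by
    by_cases hz : z ∈ Ioi c
    · rw [indicator_of_mem hz, ← Measure.prod_prod]
      congr 1
      ext q
      simp [S, mem_Ioi.mp hz, Prod.le_def]
    · rw [indicator_of_notMem hz]
      convert measure_empty (μ := (μ.map X).prod (μ.map Y))
      ext q
      simp [S, show ¬c < z from hz]
  calc μ {ω | c < Z ω ∧ a * Z ω ≤ X ω ∧ b * Z ω ≤ Y ω}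
      = μ.map (fun ω => ((X ω, Y ω), Z ω)) S := by
        rw [Measure.map_apply ((hX.prodMk hY).prodMk hZ) hS]
        rfl
    _ = _ := by
        rw [hlaw, Measure.prod_apply_symm hS, ← lintegral_indicator measurableSet_Ioi]
        exact lintegral_congr hslice

lemma exp_mul_erlangTail_mul_erlangTail (M N : ℕ) (q α γ z : ℝ) :
    exp (-(q * z)) * (erlangTail M α z * erlangTail N γ z)
      = ∑ k ∈ range N, ∑ l ∈ range M,
          α ^ l * γ ^ k / (l ! * k !) * (z ^ (k + l) * exp (-((q + α + γ) * z))) := by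
  have hexp : exp (-(q * z)) * exp (-(α * z)) * exp (-(γ * z)) = exp (-((q + α + γ) * z)) := by
    rw [← exp_add, ← exp_add]
    ring_nf
  calc exp (-(q * z)) * (erlangTail M α z * erlangTail N γ z)
      = exp (-(q * z)) * exp (-(α * z)) * exp (-(γ * z))
          * ((∑ k ∈ range N, (γ * z) ^ k / k !) * ∑ l ∈ range M, (α * z) ^ l / l !) := by
        unfold erlangTail
        ring
    _ = _ := by
        rw [hexp, sum_mul_sum, mul_sum]
        refine sum_congr rfl fun k _ => ?_
        rw [mul_sum]
        refine sum_congr rfl fun l _ => ?_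
        rw [mul_pow, mul_pow, pow_add]
        field_simp

lemma integrableOn_Ioi_exp_mul_erlangTail_mul_erlangTail (M N : ℕ) {q α γ c : ℝ}
    (hβ : 0 < q + α + γ) (hc : 0 ≤ c) :
    IntegrableOn (fun z => exp (-(q * z)) * (erlangTail M α z * erlangTail N γ z)) (Ioi c) := by
  simp_rw [exp_mul_erlangTail_mul_erlangTail]
  exact integrable_finsetSum _ fun k _ => integrable_finsetSum _ fun l _ =>
    (integrableOn_Ioi_pow_mul_exp_neg_mul hβ _ hc).const_mul _

lemma integral_Ioi_exp_mul_erlangTail_mul_erlangTail (M N : ℕ) {q α γ c : ℝ}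
    (hβ : 0 < q + α + γ) (hc : 0 ≤ c) :
    ∫ z in Ioi c, exp (-(q * z)) * (erlangTail M α z * erlangTail N γ z)
      = ∑ k ∈ range N, ∑ l ∈ range M, α ^ l * γ ^ k / (l ! * k !)
          * ((∫ t in Ioi ((q + α + γ) * c), t ^ (k + l) * exp (-t))
            / (q + α + γ) ^ (k + l + 1)) := by
  have hint (n : ℕ) := (integrableOn_Ioi_pow_mul_exp_neg_mul hβ n hc).integrable
  simp_rw [exp_mul_erlangTail_mul_erlangTail]
  rw [integral_finsetSum _ fun k _ => integrable_finsetSum _ fun l _ => (hint _).const_mul _]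
  refine sum_congr rfl fun k _ => ?_
  rw [integral_finsetSum _ fun l _ => (hint _).const_mul _]
  refine sum_congr rfl fun l _ => ?_
  rw [integral_const_mul, integral_Ioi_pow_mul_exp_neg_mul hβ]

lemma toReal_setLIntegral_expMeasure_gammaMeasure_Ici_mul {M N : ℕ} (hM : 0 < M) (hN : 0 < N)
    {q r s a b c : ℝ} (hq : 0 < q) (hr : 0 < r) (hs : 0 < s) (ha : 0 ≤ a) (hb : 0 ≤ b)
    (hc : 0 ≤ c) :
    (∫⁻ z in Ioi c, gammaMeasure M r (Ici (a * z)) * gammaMeasure N s (Ici (b * z))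
        ∂expMeasure q).toReal
      = q * ∫ z in Ioi c, exp (-(q * z)) * (erlangTail M (r * a) z * erlangTail N (s * b) z) := by
  set f : ℝ → ℝ := fun z => exp (-(q * z)) * (erlangTail M (r * a) z * erlangTail N (s * b) z)
  have hf : ∀ z ∈ Ioi c, 0 ≤ f z := fun z hz => by
    have hz : 0 ≤ z := hc.trans hz.le
    have := erlangTail_nonneg M (mul_nonneg hr.le ha) hz
    have := erlangTail_nonneg N (mul_nonneg hs.le hb) hz
    positivity
  have hmeas :
      Measurable fun z => ENNReal.ofReal (erlangTail M (r * a) z * erlangTail N (s * b) z) :=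
    ((continuous_erlangTail M _).mul (continuous_erlangTail N _)).measurable.ennreal_ofReal
  have hint : IntegrableOn f (Ioi c) :=
    integrableOn_Ioi_exp_mul_erlangTail_mul_erlangTail M N (by positivity) hc
  calc (∫⁻ z in Ioi c, gammaMeasure M r (Ici (a * z)) * gammaMeasure N s (Ici (b * z))
        ∂expMeasure q).toReal
      = (∫⁻ z in Ioi c, ENNReal.ofReal (erlangTail M (r * a) z * erlangTail N (s * b) z)
          ∂expMeasure q).toReal := by
        congr 1
        refine setLIntegral_congr_fun measurableSet_Ioi fun z hz => ?_
        have hz : 0 ≤ z := hc.trans hz.le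
        rw [gammaMeasure_Ici_natCast hM hr (by positivity), gammaMeasure_Ici_natCast hN hs
          (by positivity), ← ENNReal.ofReal_mul (erlangTail_nonneg M hr.le (by positivity)),
          erlangTail_mul_right, erlangTail_mul_right]
    _ = (∫⁻ z in Ioi c, ENNReal.ofReal (q * f z)).toReal := by
        rw [setLIntegral_Ioi_expMeasure hc hmeas]
        congr 1
        refine setLIntegral_congr_fun measurableSet_Ioi fun z hz => ?_
        rw [← ENNReal.ofReal_mul (by positivity), mul_assoc]
    _ = q * ∫ z in Ioi c, f z := by
        rw [← ofReal_integral_eq_lintegral_ofReal (hint.const_mul q)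
          (ae_restrict_of_forall_mem measurableSet_Ioi fun z hz => mul_nonneg hq.le (hf z hz)),
          ENNReal.toReal_ofReal (setIntegral_nonneg measurableSet_Ioi
            fun z hz => mul_nonneg hq.le (hf z hz)), integral_const_mul]

end ProbabilityTheory

/-- The interference-limited contribution `𝔛₂` in the PowIntICSI outage probability:
`Pr(g_n/g_p ≥ ξn/I, g_f/g_p ≥ ξf/I, g_p > I/P_peak)` equals the stated double sum
involving upper incomplete Gamma functions. -/
theorem powinticsi_X2 {Ωs : Type*} [MeasureSpace Ωs]
    [IsProbabilityMeasure (ℙ : Measure Ωs)]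
    (gn gf gp : Ωs → ℝ) (hmn : Measurable gn) (hmf : Measurable gf) (hmp : Measurable gp)
    (Nn Nf : ℕ) (hNn : 1 ≤ Nn) (hNf : 1 ≤ Nf)
    (Ωn Ωf Ωp : ℝ) (hΩn : 0 < Ωn) (hΩf : 0 < Ωf) (hΩp : 0 < Ωp)
    (hgn : Measure.map gn ℙ = gammaMeasure Nn Ωn⁻¹)
    (hgf : Measure.map gf ℙ = gammaMeasure Nf Ωf⁻¹)
    (hgp : Measure.map gp ℙ = expMeasure Ωp⁻¹)
    (hind : iIndepFun ![gn, gf, gp] ℙ)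
    (I Ppeak ξn ξf : ℝ) (hI : 0 < I) (hP : 0 < Ppeak) (hξn : 0 < ξn) (hξf : 0 < ξf) :
    (ℙ {ω | ξn / I ≤ gn ω / gp ω ∧ ξf / I ≤ gf ω / gp ω ∧ I / Ppeak < gp ω}).toReal
      = (1 / Ωp) * ∑ k ∈ Finset.range Nf, ∑ l ∈ Finset.range Nn,
          ξn ^ l * ξf ^ k
            / (Nat.factorial k * Nat.factorial l * Ωn ^ l * Ωf ^ k * I ^ (k + l))
          * (∫ t in Set.Ioi ((1 / Ωp + ξn / (Ωn * I) + ξf / (Ωf * I)) * (I / Ppeak)),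
              t ^ (k + l) * Real.exp (-t))
          / (1 / Ωp + ξn / (Ωn * I) + ξf / (Ωf * I)) ^ (k + l + 1) := by
  have hc : 0 < I / Ppeak := by positivity
  have hevent : {ω | ξn / I ≤ gn ω / gp ω ∧ ξf / I ≤ gf ω / gp ω ∧ I / Ppeak < gp ω}
      = {ω | I / Ppeak < gp ω ∧ ξn / I * gp ω ≤ gn ω ∧ ξf / I * gp ω ≤ gf ω} := by
    ext ω
    by_cases hp : I / Ppeak < gp ω
    · simp [hp, le_div_iff₀ (hc.trans hp)]
    · simp [hp]
  have hrate : Ωp⁻¹ + Ωn⁻¹ * (ξn / I) + Ωf⁻¹ * (ξf / I)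
      = 1 / Ωp + ξn / (Ωn * I) + ξf / (Ωf * I) := by
    field_simp
  rw [hevent, measure_lt_and_mul_le_and_mul_le hmn hmf hmp hind, hgn, hgf, hgp,
    toReal_setLIntegral_expMeasure_gammaMeasure_Ici_mul (by omega) (by omega) (by positivity)
      (by positivity) (by positivity) (by positivity) (by positivity) hc.le,
    integral_Ioi_exp_mul_erlangTail_mul_erlangTail _ _ (by positivity) hc.le, hrate, one_div]
  refine congrArg _ (sum_congr rfl fun k _ => sum_congr rfl fun l _ => ?_)
  rw [mul_pow, mul_pow, inv_pow, inv_pow, div_pow, div_pow]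
  field_simp
  ring
end

section
/- Fix $\theta > 0$ and integers $N_n, N_f \geq 1$, and constants $\Psi_n, \Psi_f > 0$. Define $P(I) = 1 - \prod_{u\in\{n,f\}}\left[1 - \left(\frac{\Psi_u}{I + \Psi_u}\right)^{N_u}\right]$ for $I > 0$. Then $P(I) \cdot I^{\min\{N_n, N_f\}}$ converges to a finite positive limit as $I \to \infty$ when $N_n \neq N_f$, and more generally $P(I) = \Theta(I^{-\min\{N_n, N_f\}})$ as $I \to \infty$. -/
open Real Filter Asymptotics

private lemma auxfrac (Ψ : ℝ) (hΨ : 0 < Ψ) :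
    Tendsto (fun I : ℝ => Ψ / (I + Ψ)) atTop (nhds 0) := by
  have h : Tendsto (fun I : ℝ => I + Ψ) atTop atTop :=
    tendsto_atTop_add_const_right _ _ tendsto_id
  simpa [div_eq_mul_inv] using h.inv_tendsto_atTop.const_mul Ψ

private lemma auxfrac2 (Ψ : ℝ) (hΨ : 0 < Ψ) :
    Tendsto (fun I : ℝ => Ψ * I / (I + Ψ)) atTop (nhds Ψ) := by
  have h2 : Tendsto (fun I : ℝ => Ψ - Ψ * (Ψ / (I + Ψ))) atTop (nhds (Ψ - Ψ * 0)) :=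
    tendsto_const_nhds.sub ((auxfrac Ψ hΨ).const_mul Ψ)
  rw [mul_zero, sub_zero] at h2
  refine h2.congr' ?_
  filter_upwards [eventually_gt_atTop 0] with I hI
  have hz : I + Ψ ≠ 0 := by positivity
  field_simp
  ring

private lemma auxterm (Ψ : ℝ) (hΨ : 0 < Ψ) (N m : ℕ) (hm : m ≤ N) :
    Tendsto (fun I : ℝ => (Ψ / (I + Ψ)) ^ N * I ^ m) atTop
      (nhds (Ψ ^ m * 0 ^ (N - m))) := by
  have h := ((auxfrac2 Ψ hΨ).pow m).mul ((auxfrac Ψ hΨ).pow (N - m))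
  refine h.congr' ?_
  filter_upwards [eventually_gt_atTop 0] with I hI
  have hz : I + Ψ ≠ 0 := by positivity
  rw [show Ψ * I / (I + Ψ) = Ψ / (I + Ψ) * I from by ring, mul_pow, mul_right_comm,
    ← pow_add, Nat.add_sub_cancel' hm]

/-- Diversity order of the IntICSI NOMA outage probability: with
`P(I) = 1 - ∏_u [1 - (Ψu/(I + Ψu))^{Nu}]`, the quantity `P(I) I^{min{Nn,Nf}}`
converges to a finite positive limit as `I → ∞` when `Nn ≠ Nf`, and in general
`P(I) = Θ(I^{-min{Nn,Nf}})` as `I → ∞`. -/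
theorem diversity_order_IntICSI (θ : ℝ) (hθ : 0 < θ) (Nn Nf : ℕ)
    (hNn : 1 ≤ Nn) (hNf : 1 ≤ Nf) (Ψn Ψf : ℝ) (hΨn : 0 < Ψn) (hΨf : 0 < Ψf) :
    let P : ℝ → ℝ := fun I =>
      1 - (1 - (Ψn / (I + Ψn)) ^ Nn) * (1 - (Ψf / (I + Ψf)) ^ Nf)
    (Nn ≠ Nf → ∃ L : ℝ, 0 < L ∧
        Tendsto (fun I => P I * I ^ (min Nn Nf)) atTop (nhds L)) ∧
      P =Θ[atTop] fun I : ℝ => I ^ (-(min Nn Nf : ℤ)) := by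
  intro P
  set m := min Nn Nf with hm
  have hmn : m ≤ Nn := min_le_left _ _
  have hmf : m ≤ Nf := min_le_right _ _
  have hA := auxterm Ψn hΨn Nn m hmn
  have hB := auxterm Ψf hΨf Nf m hmf
  have hbf : Tendsto (fun I : ℝ => (Ψf / (I + Ψf)) ^ Nf) atTop (nhds 0) := by
    have := (auxfrac Ψf hΨf).pow Nf
    rwa [zero_pow (by omega : Nf ≠ 0)] at this
  set L : ℝ := Ψn ^ m * 0 ^ (Nn - m) + Ψf ^ m * 0 ^ (Nf - m) with hLdef
  have hKey : Tendsto (fun I => P I * I ^ m) atTop (nhds L) := by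
    have h := (hA.add hB).sub (hA.mul hbf)
    rw [mul_zero, sub_zero] at h
    refine h.congr fun I => ?_
    simp only [P]
    ring
  have hL : 0 < L := by
    rcases le_total Nn Nf with h | h
    · have hmn' : m = Nn := min_eq_left h
      have : L = Ψn ^ Nn + Ψf ^ m * 0 ^ (Nf - m) := by
        rw [hLdef, hmn', Nat.sub_self, pow_zero, mul_one]
      rw [this]
      exact add_pos_of_pos_of_nonneg (pow_pos hΨn _) (by positivity)
    · have hmf' : m = Nf := min_eq_right h
      have : L = Ψn ^ m * 0 ^ (Nn - m) + Ψf ^ Nf := by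
        rw [hLdef, hmf', Nat.sub_self, pow_zero, mul_one]
      rw [this]
      exact add_pos_of_pos_of_nonneg (pow_pos hΨf _) (by positivity) |>.trans_le
        (le_of_eq (add_comm _ _))
  clear_value m L
  refine ⟨fun _ => ⟨L, hL, hKey⟩, ?_⟩
  -- Θ part
  have hθ1 : (fun I => P I * I ^ m) =Θ[atTop] (fun _ : ℝ => (1 : ℝ)) := by
    constructor
    · exact hKey.isBigO_one ℝ
    · refine Asymptotics.IsBigO.of_bound (2 / L) ?_
      have hev : ∀ᶠ I in atTop, L / 2 < P I * I ^ m :=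
        hKey.eventually (eventually_gt_nhds (by linarith))
      filter_upwards [hev] with I hI
      have h1 : (0 : ℝ) < L / 2 := by linarith
      have h0 : (0 : ℝ) < P I * I ^ m := h1.trans hI
      rw [norm_one, Real.norm_of_nonneg h0.le]
      have h3 : 2 / L * (L / 2) = 1 := by field_simp
      linarith [mul_lt_mul_of_pos_left hI (show (0:ℝ) < 2 / L by positivity)]
  have h2 := hθ1.mul (isTheta_refl (fun I : ℝ => I ^ (-(m : ℤ))) atTop)
  have heq : P =ᶠ[atTop] (fun I => (P I * I ^ m) * I ^ (-(m : ℤ))) := by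
    filter_upwards [eventually_gt_atTop 0] with I hI
    rw [mul_assoc, zpow_neg, zpow_natCast, mul_inv_cancel₀ (by positivity), mul_one]
  have hcast : (min (Nn : ℤ) (Nf : ℤ)) = ((m : ℕ) : ℤ) := by simp [hm]
  simp only [hcast]
  exact heq.trans_isTheta (h2.trans_eventuallyEq (Eventually.of_forall fun I => one_mul _))
end

section
/- Fix $\theta > 0$, $I > 0$, $\Omega_n, \Omega_f, \Omega_p > 0$ with $\Omega_n > \Omega_f$. Under the assumption $1/(1 - a_n(1+\theta)) > 1/a_n$ (i.e., $\xi_n = \theta/(1-a_n(1+\theta))$), the function $P(a_n) = 1 - \frac{\Omega_n}{\Omega_n + \Omega_p \xi_n/I}\cdot\frac{\Omega_f}{\Omega_f + \Omega_p \xi_f/I}$ with $\xi_f = \theta/(1 - a_n(1+\theta))$ has no stationary point in $(0, 1/(1+\theta))$: its derivative's zeros are $a_n = 1/(1+\theta)$ and $a_n = 1/(1+\theta) + 2\Omega_p\theta/(I(\Omega_n+\Omega_f)(1+\theta))$, both $\geq 1/(1+\theta)$. -/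
/-!
Write `s = Ωp ξ / I` for the normalised interference term. Then
`P = 1 - Ωn/(Ωn + s) · Ωf/(Ωf + s)`, and both factors are positive and strictly decreasing in `s`,
so `P` is strictly increasing in `s` with positive derivative. On `(0, 1/(1+θ))` the map
`a ↦ ξ a = θ/(1 - a(1+θ))` is positive with positive derivative, hence so is `P'`.
-/

theorem hasDerivAt_div_one_sub_mul (θ b a : ℝ) (h : 1 - a * b ≠ 0) :
    HasDerivAt (fun x => θ / (1 - x * b)) (θ * b / (1 - a * b) ^ 2) a := by
  have hden : HasDerivAt (fun x => 1 - x * b) (-b) a := by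
    simpa using ((hasDerivAt_id a).mul_const b).const_sub 1
  exact ((hasDerivAt_const a θ).fun_div hden h).congr_deriv (by ring)

theorem hasDerivAt_div_self_add {s : ℝ → ℝ} {s' a : ℝ} (k : ℝ) (hs : HasDerivAt s s' a)
    (h : k + s a ≠ 0) :
    HasDerivAt (fun x => k / (k + s x)) (-(k * s') / (k + s a) ^ 2) a :=
  ((hasDerivAt_const a k).fun_div (hs.const_add k) h).congr_deriv (by ring)

theorem deriv_one_sub_div_self_add_mul_pos {s : ℝ → ℝ} {s' a k₁ k₂ : ℝ}
    (hk₁ : 0 < k₁) (hk₂ : 0 < k₂) (hs : HasDerivAt s s' a) (hsa : 0 ≤ s a) (hs' : 0 < s') :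
    0 < deriv (fun x => 1 - k₁ / (k₁ + s x) * (k₂ / (k₂ + s x))) a := by
  have h₁ : 0 < k₁ + s a := by linarith
  have h₂ : 0 < k₂ + s a := by linarith
  rw [(((hasDerivAt_div_self_add k₁ hs h₁.ne').fun_mul
    (hasDerivAt_div_self_add k₂ hs h₂.ne')).const_sub 1).deriv]
  have hd : ∀ k, 0 < k + s a → 0 < k → -(k * s') / (k + s a) ^ 2 < 0 := fun k hka hk =>
    div_neg_of_neg_of_pos (neg_neg_of_pos (mul_pos hk hs')) (pow_pos hka 2)
  have := mul_neg_of_neg_of_pos (hd k₁ h₁ hk₁) (div_pos hk₂ h₂)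
  have := mul_neg_of_pos_of_neg (div_pos hk₁ h₁) (hd k₂ h₂ hk₂)
  linarith

theorem no_stationary_point_sic_regime_general (θ I Ωn Ωf Ωp : ℝ) (hθ : 0 < θ) (hI : 0 < I)
    (hΩn : 0 < Ωn) (hΩf : 0 < Ωf) (hΩp : 0 < Ωp) :
    let ξ : ℝ → ℝ := fun a => θ / (1 - a * (1 + θ))
    let P : ℝ → ℝ := fun a =>
      1 - (Ωn / (Ωn + Ωp * ξ a / I)) * (Ωf / (Ωf + Ωp * ξ a / I))
    (∀ a ∈ Set.Ioo (0 : ℝ) (1 / (1 + θ)), deriv P a ≠ 0) ∧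
      1 / (1 + θ) ≤ 1 / (1 + θ) + 2 * Ωp * θ / (I * (Ωn + Ωf) * (1 + θ)) := by
  intro ξ P
  refine ⟨fun a ⟨_, ha⟩ => ?_, le_add_of_nonneg_right (by positivity)⟩
  have hu : 0 < 1 - a * (1 + θ) := by
    have := (lt_div_iff₀ (by positivity : (0 : ℝ) < 1 + θ)).mp ha
    linarith
  have hξ := ((hasDerivAt_div_one_sub_mul θ (1 + θ) a hu.ne').const_mul Ωp).div_const I
  have hξa : 0 ≤ Ωp * ξ a / I := by have : 0 < ξ a := div_pos hθ hu; positivity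
  exact (deriv_one_sub_div_self_add_mul_pos hΩn hΩf hξ hξa (by positivity)).ne'

/-- Infeasibility argument in Appendix C: when `ξn = θ/(1 - a(1+θ))` (SIC-dominated
regime), the single-antenna IntICSI outage probability has no stationary point in
`(0, 1/(1+θ))`; the candidate zeros of its derivative, `1/(1+θ)` and
`1/(1+θ) + 2Ωpθ/(I(Ωn+Ωf)(1+θ))`, are both `≥ 1/(1+θ)`. -/
theorem no_stationary_point_sic_regime (θ I Ωn Ωf Ωp : ℝ) (hθ : 0 < θ) (hI : 0 < I)
    (hΩn : 0 < Ωn) (hΩf : 0 < Ωf) (hΩp : 0 < Ωp) (hord : Ωf < Ωn) :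
    let ξ : ℝ → ℝ := fun a => θ / (1 - a * (1 + θ))
    let P : ℝ → ℝ := fun a =>
      1 - (Ωn / (Ωn + Ωp * ξ a / I)) * (Ωf / (Ωf + Ωp * ξ a / I))
    (∀ a ∈ Set.Ioo (0 : ℝ) (1 / (1 + θ)), deriv P a ≠ 0) ∧
      1 / (1 + θ) ≤ 1 / (1 + θ) + 2 * Ωp * θ / (I * (Ωn + Ωf) * (1 + θ)) :=
  no_stationary_point_sic_regime_general θ I Ωn Ωf Ωp hθ hI hΩn hΩf hΩp
end
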